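/- arXiv:1701.08417 — 2 statements merged into one kernel-verified Lean document; each statement's English description precedes it below -/
import Mathlib

section
/- Every bψ-perfect graph is perfect; that is, if for every induced subgraph H of G the b-chromatic number of H equals the pseudoachromatic number of H, then for every induced subgraph H of G the chromatic number of H equals the clique number of H. -/
open SimpleGraph

/-- A `k`-coloring `c` of `G` is *complete* if it is surjective and for every pair of distinct
colors there is an edge of `G` whose endpoints receive those two colors. -/
def IsCompleteColoring {V : Type*} (G : SimpleGraph V) {k : ℕ} (c : V → Fin k) : Prop :=
  Function.Surjective c ∧
    ∀ i j : Fin k, i ≠ j → ∃ u v : V, G.Adj u v ∧ c u = i ∧ c v = j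

/-- A coloring is *proper* if adjacent vertices receive distinct colors. -/
def IsProperColoring {V : Type*} (G : SimpleGraph V) {k : ℕ} (c : V → Fin k) : Prop :=
  ∀ u v : V, G.Adj u v → c u ≠ c v

/-- A `k`-coloring `c` of `G` is *dominating* if it is surjective and every color class contains
a vertex having a neighbor in every other color class. -/
def IsDominatingColoring {V : Type*} (G : SimpleGraph V) {k : ℕ} (c : V → Fin k) : Prop :=
  Function.Surjective c ∧
    ∀ i : Fin k, ∃ v : V, c v = i ∧ ∀ j : Fin k, j ≠ i → ∃ u : V, G.Adj v u ∧ c u = j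

/-- A `k`-coloring `c` of `G` is *pseudo-Grundy* if it is surjective and every vertex is
adjacent to at least one vertex of each smaller color. -/
def IsPseudoGrundyColoring {V : Type*} (G : SimpleGraph V) {k : ℕ} (c : V → Fin k) : Prop :=
  Function.Surjective c ∧
    ∀ v : V, ∀ j : Fin k, j < c v → ∃ u : V, G.Adj v u ∧ c u = j

/-- The pseudoachromatic number `ψ(G)`: the largest `k` admitting a complete `k`-coloring. -/
noncomputable def pseudoachromaticNumber {V : Type*} (G : SimpleGraph V) : ℕ :=
  sSup {k | ∃ c : V → Fin k, IsCompleteColoring G c}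

/-- The achromatic number `α(G)`: the largest `k` admitting a proper complete `k`-coloring. -/
noncomputable def achromaticNumber {V : Type*} (G : SimpleGraph V) : ℕ :=
  sSup {k | ∃ c : V → Fin k, IsProperColoring G c ∧ IsCompleteColoring G c}

/-- The b-chromatic number `b(G)`: the largest `k` admitting a proper dominating `k`-coloring. -/
noncomputable def bChromaticNumber {V : Type*} (G : SimpleGraph V) : ℕ :=
  sSup {k | ∃ c : V → Fin k, IsProperColoring G c ∧ IsDominatingColoring G c}

/-- The pseudo-b-chromatic number `B(G)`: the largest `k` admitting a dominating `k`-coloring. -/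
noncomputable def pseudoBChromaticNumber {V : Type*} (G : SimpleGraph V) : ℕ :=
  sSup {k | ∃ c : V → Fin k, IsDominatingColoring G c}

/-- The Grundy number `Γ(G)`: the largest `k` admitting a proper pseudo-Grundy `k`-coloring. -/
noncomputable def grundyNumber {V : Type*} (G : SimpleGraph V) : ℕ :=
  sSup {k | ∃ c : V → Fin k, IsProperColoring G c ∧ IsPseudoGrundyColoring G c}

/-- The pseudo-Grundy number `γ(G)`: the largest `k` admitting a pseudo-Grundy `k`-coloring. -/
noncomputable def pseudoGrundyNumber {V : Type*} (G : SimpleGraph V) : ℕ :=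
  sSup {k | ∃ c : V → Fin k, IsPseudoGrundyColoring G c}

/-- `G` contains the complete graph `K_k` as a minor: there are `k` pairwise disjoint
"branch sets", each inducing a connected (nonempty) subgraph, with an edge of `G` between
every two of them. -/
def HasCompleteMinor {V : Type*} (G : SimpleGraph V) (k : ℕ) : Prop :=
  ∃ B : Fin k → Set V,
    (∀ i, (G.induce (B i)).Connected) ∧
    (∀ i j : Fin k, i ≠ j → Disjoint (B i) (B j)) ∧
    (∀ i j : Fin k, i ≠ j → ∃ u ∈ B i, ∃ v ∈ B j, G.Adj u v)

/-- The Hadwiger number `h(G)`: the largest `k` such that `K_k` is a minor of `G`. -/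
noncomputable def hadwigerNumber {V : Type*} (G : SimpleGraph V) : ℕ :=
  sSup {k | HasCompleteMinor G k}

/-- `G` has an induced subgraph isomorphic to `H`. -/
def HasInducedCopy {V : Type*} {W : Type*} (G : SimpleGraph V) (H : SimpleGraph W) : Prop :=
  ∃ s : Set V, Nonempty (G.induce s ≃g H)

/-- A graph is *chordal* if it has no induced cycle on four or more vertices. -/
def IsChordal {V : Type*} (G : SimpleGraph V) : Prop :=
  ∀ n : ℕ, 4 ≤ n → ¬ HasInducedCopy G (cycleGraph n)

/-- The diamond graph `D`: `K₄` minus one edge. -/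
def diamondGraph : SimpleGraph (Fin 4) :=
  (⊤ : SimpleGraph (Fin 4)).deleteEdges {s(0, 1)}

/-!
Both the path `P₄` and the cycle `C₄` have a complete 3-coloring but b-chromatic number 2: in
`P₄` only the two inner vertices have two neighbours, and in `C₄` opposite vertices are twins,
while in a proper coloring a vertex seeing every other color has no twin of another color.
Hence a bψ-perfect graph contains neither `P₄` nor `C₄` as an induced subgraph. In such a
graph the neighbourhood of a vertex `v` of minimum degree is a clique: if `x, y ∈ N(v)` were
non-adjacent, every neighbour of `x` other than `v` would lie in `N(v)` (otherwise `P₄` or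
`C₄` appears), so `deg x < deg v`. Thus `deg v < ω`, and an `ω`-coloring of `G - v` extends
to `G`.
-/

section Colorings

variable {V W : Type*} {G : SimpleGraph V} {H : SimpleGraph W} {k : ℕ}

def IsBVertex (G : SimpleGraph V) (c : V → Fin k) (v : V) : Prop :=
  ∀ j, j ≠ c v → ∃ u, G.Adj v u ∧ c u = j

theorem IsCompleteColoring.le_pseudoachromaticNumber [Finite V] {c : V → Fin k}
    (hc : IsCompleteColoring G c) : k ≤ pseudoachromaticNumber G := by
  refine le_csSup ⟨Nat.card V, ?_⟩ ⟨c, hc⟩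
  rintro n ⟨c', hc', -⟩
  simpa using Nat.card_le_card_of_surjective c' hc'

theorem IsCompleteColoring.comp_iso {c : W → Fin k} (hc : IsCompleteColoring H c)
    (e : G ≃g H) : IsCompleteColoring G (c ∘ e) := by
  refine ⟨hc.1.comp e.surjective, fun i j hij => ?_⟩
  obtain ⟨u, v, huv, rfl, rfl⟩ := hc.2 i j hij
  exact ⟨e.symm u, e.symm v, e.symm.map_adj_iff.mpr huv, by simp, by simp⟩

theorem IsProperColoring.comp_iso {c : W → Fin k} (hc : IsProperColoring H c)
    (e : G ≃g H) : IsProperColoring G (c ∘ e) :=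
  fun _ _ huv => hc _ _ (e.map_adj_iff.mpr huv)

theorem IsDominatingColoring.comp_iso {c : W → Fin k} (hc : IsDominatingColoring H c)
    (e : G ≃g H) : IsDominatingColoring G (c ∘ e) := by
  refine ⟨hc.1.comp e.surjective, fun i => ?_⟩
  obtain ⟨v, rfl, hv⟩ := hc.2 i
  refine ⟨e.symm v, by simp, fun j hj => ?_⟩
  obtain ⟨u, hvu, rfl⟩ := hv j hj
  exact ⟨e.symm u, e.symm.map_adj_iff.mpr hvu, by simp⟩

theorem SimpleGraph.Iso.pseudoachromaticNumber_eq (e : G ≃g H) :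
    pseudoachromaticNumber G = pseudoachromaticNumber H := by
  unfold pseudoachromaticNumber
  congr 1
  ext k
  exact ⟨fun ⟨c, hc⟩ => ⟨c ∘ e.symm, hc.comp_iso e.symm⟩, fun ⟨c, hc⟩ => ⟨c ∘ e, hc.comp_iso e⟩⟩

theorem SimpleGraph.Iso.bChromaticNumber_eq (e : G ≃g H) :
    bChromaticNumber G = bChromaticNumber H := by
  unfold bChromaticNumber
  congr 1
  ext k
  exact ⟨fun ⟨c, hp, hd⟩ => ⟨c ∘ e.symm, hp.comp_iso e.symm, hd.comp_iso e.symm⟩,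
    fun ⟨c, hp, hd⟩ => ⟨c ∘ e, hp.comp_iso e, hd.comp_iso e⟩⟩

theorem IsDominatingColoring.exists_three_bVertices {c : V → Fin k}
    (hc : IsDominatingColoring G c) (hk : 3 ≤ k) :
    ∃ x y z, IsBVertex G c x ∧ IsBVertex G c y ∧ IsBVertex G c z ∧
      c x ≠ c y ∧ c x ≠ c z ∧ c y ≠ c z := by
  obtain ⟨x, hx, hbx⟩ := hc.2 ⟨0, by omega⟩
  obtain ⟨y, hy, hby⟩ := hc.2 ⟨1, by omega⟩
  obtain ⟨z, hz, hbz⟩ := hc.2 ⟨2, by omega⟩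
  refine ⟨x, y, z, fun j hj => hbx j (hx ▸ hj), fun j hj => hby j (hy ▸ hj),
    fun j hj => hbz j (hz ▸ hj), ?_, ?_, ?_⟩ <;> simp [hx, hy, hz]

theorem IsBVertex.neighborSet_nontrivial {c : V → Fin k} {x y z : V} (hx : IsBVertex G c x)
    (hy : c y ≠ c x) (hz : c z ≠ c x) (hyz : c y ≠ c z) : (G.neighborSet x).Nontrivial := by
  obtain ⟨u, hxu, hu⟩ := hx _ hy
  obtain ⟨w, hxw, hw⟩ := hx _ hz
  exact ⟨u, hxu, w, hxw, fun h => hyz (by rw [← hu, ← hw, h])⟩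

theorem IsBVertex.neighborSet_ne {c : V → Fin k} {x y : V} (hc : IsProperColoring G c)
    (hx : IsBVertex G c x) (hy : c y ≠ c x) : G.neighborSet x ≠ G.neighborSet y := by
  intro h
  obtain ⟨u, hxu, hu⟩ := hx _ hy
  have hyu : G.Adj y u := by rw [← mem_neighborSet, ← h]; exact hxu
  exact hc y u hyu hu.symm

private lemma eq_or_eq_or_eq_of_mem_pair {α : Type*} {a b x y z : α} (hx : x = a ∨ x = b)
    (hy : y = a ∨ y = b) (hz : z = a ∨ z = b) : x = y ∨ x = z ∨ y = z := by
  rcases hx with rfl | rfl <;> rcases hy with rfl | rfl <;> rcases hz with rfl | rfl <;> simp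

theorem bChromaticNumber_le_two_of_neighborSet_subsingleton {y z : V}
    (h : ∀ v, v ≠ y → v ≠ z → (G.neighborSet v).Subsingleton) : bChromaticNumber G ≤ 2 := by
  refine csSup_le' ?_
  rintro k ⟨c, -, hc⟩
  by_contra! hk
  obtain ⟨x₁, x₂, x₃, h₁, h₂, h₃, h₁₂, h₁₃, h₂₃⟩ := hc.exists_three_bVertices hk
  have hyz : ∀ x, (G.neighborSet x).Nontrivial → x = y ∨ x = z := fun x hx => by
    by_contra! hxyz
    exact hx.not_subsingleton (h x hxyz.1 hxyz.2)
  rcases eq_or_eq_or_eq_of_mem_pair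
      (hyz _ (h₁.neighborSet_nontrivial h₁₂.symm h₁₃.symm h₂₃))
      (hyz _ (h₂.neighborSet_nontrivial h₁₂ h₂₃.symm h₁₃))
      (hyz _ (h₃.neighborSet_nontrivial h₁₃ h₂₃ h₁₂)) with e | e | e
  exacts [h₁₂ (congrArg c e), h₁₃ (congrArg c e), h₂₃ (congrArg c e)]

theorem bChromaticNumber_le_two_of_neighborSet_eq_or_eq {a b : V}
    (h : ∀ v, G.neighborSet v = G.neighborSet a ∨ G.neighborSet v = G.neighborSet b) :
    bChromaticNumber G ≤ 2 := by
  refine csSup_le' ?_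
  rintro k ⟨c, hp, hc⟩
  by_contra! hk
  obtain ⟨x₁, x₂, x₃, h₁, h₂, h₃, h₁₂, h₁₃, h₂₃⟩ := hc.exists_three_bVertices hk
  rcases eq_or_eq_or_eq_of_mem_pair (h x₁) (h x₂) (h x₃) with e | e | e
  exacts [h₁.neighborSet_ne hp h₁₂.symm e, h₁.neighborSet_ne hp h₁₃.symm e,
    h₂.neighborSet_ne hp h₂₃.symm e]

theorem not_isIndContained_of_bChromaticNumber_lt {F : SimpleGraph W}
    (hG : ∀ s : Set V, bChromaticNumber (G.induce s) = pseudoachromaticNumber (G.induce s))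
    (hF : bChromaticNumber F < pseudoachromaticNumber F) : ¬F ⊴ G := by
  intro hFG
  obtain ⟨s, ⟨e⟩⟩ := isIndContained_iff_exists_iso_induce.mp hFG
  rw [e.bChromaticNumber_eq, e.pseudoachromaticNumber_eq, hG s] at hF
  exact lt_irrefl _ hF

end Colorings

theorem bChromaticNumber_pathGraph_four_lt :
    bChromaticNumber (pathGraph 4) < pseudoachromaticNumber (pathGraph 4) := by
  have hb : bChromaticNumber (pathGraph 4) ≤ 2 := by
    refine bChromaticNumber_le_two_of_neighborSet_subsingleton (y := 1) (z := 2) ?_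
    intro v _ _ u hu w hw
    simp only [mem_neighborSet, pathGraph_adj] at hu hw
    revert v u w
    decide
  have hψ : IsCompleteColoring (pathGraph 4) (![0, 1, 2, 0] : Fin 4 → Fin 3) :=
    ⟨by decide, by simp only [pathGraph_adj]; decide⟩
  have := hψ.le_pseudoachromaticNumber
  omega

theorem bChromaticNumber_cycleGraph_four_lt :
    bChromaticNumber (cycleGraph 4) < pseudoachromaticNumber (cycleGraph 4) := by
  have hb : bChromaticNumber (cycleGraph 4) ≤ 2 := by
    refine bChromaticNumber_le_two_of_neighborSet_eq_or_eq (a := 0) (b := 1) ?_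
    simp only [Set.ext_iff, mem_neighborSet]
    decide
  have hψ : IsCompleteColoring (cycleGraph 4) (![0, 1, 2, 2] : Fin 4 → Fin 3) :=
    ⟨by decide, by decide⟩
  have := hψ.le_pseudoachromaticNumber
  omega

namespace SimpleGraph

variable {V : Type*} {G : SimpleGraph V}

theorem pathGraph_four_isIndContained {a b c d : V} (hab : G.Adj a b) (hbc : G.Adj b c)
    (hcd : G.Adj c d) (hac : ¬G.Adj a c) (had : ¬G.Adj a d) (hbd : ¬G.Adj b d) :
    pathGraph 4 ⊴ G := by
  have hac' : a ≠ c := by rintro rfl; exact had hcd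
  have had' : a ≠ d := by rintro rfl; exact hac hcd.symm
  have hbd' : b ≠ d := by rintro rfl; exact had hab
  refine ⟨⟨⟨![a, b, c, d], fun i j hij => ?_⟩, fun {i j} => ?_⟩⟩
  · fin_cases i <;> fin_cases j <;> simp_all [hab.ne, hbc.ne, hcd.ne, eq_comm]
  · change G.Adj (![a, b, c, d] i) (![a, b, c, d] j) ↔ _
    fin_cases i <;> fin_cases j <;> simp [pathGraph_adj, hab, hbc, hcd, hac, had, hbd, G.adj_comm]

theorem cycleGraph_four_isIndContained {a b c d : V} (hac : a ≠ c) (hbd : b ≠ d)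
    (hab : G.Adj a b) (hbc : G.Adj b c) (hcd : G.Adj c d) (hda : G.Adj d a)
    (hac' : ¬G.Adj a c) (hbd' : ¬G.Adj b d) : cycleGraph 4 ⊴ G := by
  refine ⟨⟨⟨![a, b, c, d], fun i j hij => ?_⟩, fun {i j} => ?_⟩⟩
  · fin_cases i <;> fin_cases j <;> simp_all [hab.ne, hbc.ne, hcd.ne, hda.ne, eq_comm]
  · change G.Adj (![a, b, c, d] i) (![a, b, c, d] j) ↔ _
    fin_cases i <;> fin_cases j <;>
      simp [hab, hbc, hcd, hda, hda.symm, hac', hbd', G.adj_comm] <;> decide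

theorem adj_of_not_isIndContained (hP4 : ¬pathGraph 4 ⊴ G) (hC4 : ¬cycleGraph 4 ⊴ G)
    {v x y z : V} (hvx : G.Adj v x) (hvy : G.Adj v y) (hxy : x ≠ y) (hnxy : ¬G.Adj x y)
    (hxz : G.Adj x z) (hzv : z ≠ v) : G.Adj v z := by
  by_contra hvz
  by_cases hyz : G.Adj y z
  · exact hC4 (cycleGraph_four_isIndContained hxy.symm hzv.symm hvy.symm hvx hxz hyz.symm
      (fun h => hnxy h.symm) hvz)
  · exact hP4 (pathGraph_four_isIndContained hvy.symm hvx hxz (fun h => hnxy h.symm) hyz hvz)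

theorem isClique_neighborSet_of_forall_degree_le [Fintype V] [DecidableRel G.Adj]
    (hP4 : ¬pathGraph 4 ⊴ G) (hC4 : ¬cycleGraph 4 ⊴ G) {v : V}
    (hv : ∀ w, G.degree v ≤ G.degree w) : G.IsClique (G.neighborSet v) := by
  classical
  intro x hx y hy hxy
  by_contra hnxy
  have hsub : G.neighborFinset x ⊆ ((insert v (G.neighborFinset v)).erase x).erase y := by
    intro z hz
    rw [mem_neighborFinset] at hz
    simp only [Finset.mem_erase, Finset.mem_insert, mem_neighborFinset]
    refine ⟨fun hzy => hnxy (hzy ▸ hz), hz.ne', ?_⟩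
    by_cases hzv : z = v
    · exact .inl hzv
    · exact .inr (adj_of_not_isIndContained hP4 hC4 hx hy hxy hnxy hz hzv)
  have hcard := Finset.card_le_card hsub
  rw [Finset.card_erase_of_mem (by simpa [hxy.symm] using .inr hy),
    Finset.card_erase_of_mem (by simpa using .inr hx),
    Finset.card_insert_of_notMem (by simp), card_neighborFinset_eq_degree,
    card_neighborFinset_eq_degree] at hcard
  have := hv x
  have : 0 < G.degree v := G.degree_pos_iff_exists_adj v |>.mpr ⟨x, hx⟩
  omega

theorem degree_lt_cliqueNum_of_isClique_neighborSet [Finite V] {v : V} [Fintype (G.neighborSet v)]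
    (hv : G.IsClique (G.neighborSet v)) : G.degree v < G.cliqueNum := by
  classical
  have hclique : G.IsClique (insert v (G.neighborFinset v) : Finset V) := by
    rw [Finset.coe_insert, coe_neighborFinset, isClique_insert]
    exact ⟨hv, fun w hw _ => hw⟩
  calc G.degree v < (insert v (G.neighborFinset v)).card := by
        rw [Finset.card_insert_of_notMem (by simp), card_neighborFinset_eq_degree]
        exact Nat.lt_succ_self _
    _ ≤ G.cliqueNum := hclique.card_le_cliqueNum

theorem Colorable.of_induce_compl_singleton {n : ℕ} {v : V} [Fintype (G.neighborSet v)]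
    (h : (G.induce {v}ᶜ).Colorable n) (hv : G.degree v < n) : G.Colorable n := by
  classical
  obtain ⟨C⟩ := h
  let f : G.neighborSet v → Fin n := fun w => C ⟨w, (w.2 : G.Adj v w).ne'⟩
  obtain ⟨i, hi⟩ : ∃ i, ∀ w, f w ≠ i := by
    by_contra! hf
    have := Fintype.card_le_of_surjective f hf
    rw [Fintype.card_fin, card_neighborSet_eq_degree] at this
    omega
  refine ⟨Coloring.mk (fun w => if h : w = v then i else C ⟨w, h⟩) fun {p q} hpq => ?_⟩
  show (if h : p = v then i else C ⟨p, h⟩) ≠ (if h : q = v then i else C ⟨q, h⟩)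
  by_cases hp : p = v <;> by_cases hq : q = v
  · exact (hpq.ne (hp.trans hq.symm)).elim
  · rw [dif_pos hp, dif_neg hq]
    exact (hi ⟨q, hp ▸ hpq⟩).symm
  · rw [dif_neg hp, dif_pos hq]
    exact hi ⟨p, hq ▸ hpq.symm⟩
  · rw [dif_neg hp, dif_neg hq]
    exact C.valid (show (G.induce {v}ᶜ).Adj ⟨p, hp⟩ ⟨q, hq⟩ from hpq)

theorem colorable_cliqueNum_of_not_isIndContained [Finite V] (hP4 : ¬pathGraph 4 ⊴ G)
    (hC4 : ¬cycleGraph 4 ⊴ G) : G.Colorable G.cliqueNum := by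
  induction hn : Nat.card V using Nat.strong_induction_on generalizing V with
  | _ n ih =>
  cases isEmpty_or_nonempty V
  · exact .of_isEmpty _
  classical
  have := Fintype.ofFinite V
  obtain ⟨v, hv⟩ := G.exists_minimal_degree_vertex
  have hfree {F : SimpleGraph (Fin 4)} (hF : ¬F ⊴ G) : ¬F ⊴ G.induce {v}ᶜ :=
    fun h => hF (h.trans (Embedding.induce _).isIndContained)
  have hcard : Nat.card ({v}ᶜ : Set V) < n := hn ▸ Finite.card_subtype_lt (x := v) (by simp)
  refine ((ih _ hcard (hfree hP4) (hfree hC4) rfl).mono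
    (cliqueNum_induce_le _)).of_induce_compl_singleton ?_
  exact degree_lt_cliqueNum_of_isClique_neighborSet
    (isClique_neighborSet_of_forall_degree_le hP4 hC4 fun w => hv ▸ G.minDegree_le_degree w)

theorem chromaticNumber_eq_cliqueNum_of_not_isIndContained [Finite V]
    (hP4 : ¬pathGraph 4 ⊴ G) (hC4 : ¬cycleGraph 4 ⊴ G) :
    G.chromaticNumber = G.cliqueNum :=
  le_antisymm (colorable_cliqueNum_of_not_isIndContained hP4 hC4).chromaticNumber_le
    G.cliqueNum_le_chromaticNumber

end SimpleGraph

/-- Every bψ-perfect graph is perfect. -/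
theorem b_pseudoachromatic_perfect_is_perfect {V : Type*} [Fintype V] (G : SimpleGraph V)
    (h : ∀ s : Set V, bChromaticNumber (G.induce s) = pseudoachromaticNumber (G.induce s)) :
    ∀ s : Set V, (G.induce s).chromaticNumber = ((G.induce s).cliqueNum : ℕ∞) := by
  have hP4 : ¬pathGraph 4 ⊴ G :=
    not_isIndContained_of_bChromaticNumber_lt h bChromaticNumber_pathGraph_four_lt
  have hC4 : ¬cycleGraph 4 ⊴ G :=
    not_isIndContained_of_bChromaticNumber_lt h bChromaticNumber_cycleGraph_four_lt
  intro s
  have hs : G.induce s ⊴ G := (Embedding.induce s).isIndContained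
  exact chromaticNumber_eq_cliqueNum_of_not_isIndContained (fun h' => hP4 (h'.trans hs))
    (fun h' => hC4 (h'.trans hs))
end

section
/- A finite simple graph G is Γh-perfect (for every induced subgraph H, the Grundy number of H equals the Hadwiger number of H) if and only if G is ωγ-perfect (for every induced subgraph H, the clique number of H equals the pseudo-Grundy number of H). -/
open SimpleGraph

/-!
Both conditions say that `G` is trivially perfect, i.e. has no induced `P₄` or `C₄`.

In a trivially perfect graph adjacent vertices have nested closed neighborhoods. Hence in every
branch set of a `K_k` minor a vertex with the largest closed neighborhood dominates the whole
branch set, and these `k` vertices form a clique: `h ≤ ω`. For a pseudo-Grundy coloring `c`, the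
vertices whose closed neighborhood contains `N[v]` form a clique joined to all of `N[v]`; the
largest color below `c v` that this clique misses sits on a neighbor `u` of `v` with
`N[u] ⊊ N[v]`, so induction on `|N[v]|` yields a clique meeting every color `≤ c v`: `γ ≤ ω`.
A proper coloring with minimal color sum is a Grundy coloring, so `ω ≤ Γ`; together with the
general `Γ ≤ γ` and `ω ≤ h`, all four parameters agree on every induced subgraph.

Conversely an induced `P₄` has `Γ = 3 > 2 = h` and an induced `C₄` has `Γ = 2 < 3 = h`, while both
have `ω = 2 < 3 = γ`.
-/

namespace SimpleGraph

variable {V : Type*} {G : SimpleGraph V}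

def closedNeighborSet (G : SimpleGraph V) (v : V) : Set V :=
  insert v (G.neighborSet v)

theorem mem_closedNeighborSet {v w : V} : w ∈ G.closedNeighborSet v ↔ w = v ∨ G.Adj v w :=
  Iff.rfl

theorem IsClique.ncard_le_cliqueNum [Finite V] {s : Set V} (hs : G.IsClique s) :
    s.ncard ≤ G.cliqueNum := by
  rw [Set.ncard_eq_toFinset_card s]
  exact IsClique.card_le_cliqueNum (tc := by simpa using hs)

theorem IsNClique.hasCompleteMinor {n : ℕ} {t : Finset V} (ht : G.IsNClique n t) :
    HasCompleteMinor G n := by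
  let e : Fin n ≃ t := (t.equivFinOfCardEq ht.card_eq).symm
  have hne : ∀ i j, i ≠ j → (e i : V) ≠ e j := fun i j hij h =>
    hij (e.injective (Subtype.ext h))
  refine ⟨fun i => {(e i : V)}, fun i => Connected.of_subsingleton, fun i j hij => ?_,
    fun i j hij => ⟨e i, rfl, e j, rfl, ht.isClique (e i).2 (e j).2 (hne i j hij)⟩⟩
  exact Set.disjoint_singleton.mpr (hne i j hij)

end SimpleGraph

section

variable {V : Type*} {G : SimpleGraph V}

theorem HasCompleteMinor.le_card [Finite V] {k : ℕ} (h : HasCompleteMinor G k) :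
    k ≤ Nat.card V := by
  obtain ⟨B, hconn, hdisj, -⟩ := h
  choose x hx using fun i => Set.nonempty_coe_sort.mp (hconn i).nonempty
  have hinj : Function.Injective x := fun i j hij => by
    by_contra hne
    exact Set.disjoint_left.mp (hdisj i j hne) (hx i) (hij ▸ hx j)
  simpa using Nat.card_le_card_of_injective x hinj

theorem bddAbove_pseudoGrundy [Finite V] :
    BddAbove {k | ∃ c : V → Fin k, IsPseudoGrundyColoring G c} :=
  ⟨Nat.card V, by
    rintro _ ⟨c, hc⟩
    simpa using Nat.card_le_card_of_surjective c hc.1⟩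

theorem bddAbove_grundy [Finite V] :
    BddAbove {k | ∃ c : V → Fin k, IsProperColoring G c ∧ IsPseudoGrundyColoring G c} :=
  bddAbove_pseudoGrundy.mono <| by
    rintro _ ⟨c, -, hc⟩
    exact ⟨c, hc⟩

theorem bddAbove_hasCompleteMinor [Finite V] : BddAbove {k | HasCompleteMinor G k} :=
  ⟨Nat.card V, fun _ => HasCompleteMinor.le_card⟩

theorem grundyNumber_le_pseudoGrundyNumber [Finite V] : grundyNumber G ≤ pseudoGrundyNumber G :=
  csSup_le' fun _ ⟨c, _, hc⟩ => le_csSup bddAbove_pseudoGrundy ⟨c, hc⟩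

theorem cliqueNum_le_hadwigerNumber [Finite V] : G.cliqueNum ≤ hadwigerNumber G :=
  le_csSup bddAbove_hasCompleteMinor G.exists_isNClique_cliqueNum.choose_spec.hasCompleteMinor

/-- `IsPseudoGrundyColoring G c` unfolds to `Surjective c ∧ HasSmallerColorNeighbors G c`. -/
def HasSmallerColorNeighbors (G : SimpleGraph V) {α : Type*} [LT α] (c : V → α) : Prop :=
  ∀ v j, j < c v → ∃ u, G.Adj v u ∧ c u = j

theorem HasSmallerColorNeighbors.exists_isPseudoGrundyColoring [Fintype V] {c : V → ℕ}
    (hc : HasSmallerColorNeighbors G c) :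
    ∃ m, ∃ c' : V → Fin m, IsPseudoGrundyColoring G c' ∧ ∀ v, (c' v : ℕ) = c v := by
  have hlt : ∀ v, c v < Finset.univ.sup (c · + 1) := fun v =>
    Nat.lt_of_succ_le (Finset.le_sup (f := (c · + 1)) (Finset.mem_univ v))
  refine ⟨_, fun v => ⟨c v, hlt v⟩, ⟨fun i => ?_, fun v j hj => ?_⟩, fun _ => rfl⟩
  · obtain ⟨v, -, hv⟩ := Finset.lt_sup_iff.mp i.2
    rcases (Nat.lt_succ_iff.mp hv).lt_or_eq with h | h
    · obtain ⟨u, -, hu⟩ := hc v i h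
      exact ⟨u, Fin.ext hu⟩
    · exact ⟨v, Fin.ext h.symm⟩
  · obtain ⟨u, hvu, hu⟩ := hc v j hj
    exact ⟨u, hvu, Fin.ext hu⟩

/-- A proper coloring minimizing the sum of the colors: recoloring any vertex with a smaller
color missing from its neighborhood would decrease the sum. -/
theorem exists_proper_hasSmallerColorNeighbors [Fintype V] :
    ∃ c : V → ℕ, (∀ u v, G.Adj u v → c u ≠ c v) ∧ HasSmallerColorNeighbors G c := by
  classical
  let IsProper : (V → ℕ) → Prop := fun c => ∀ u v, G.Adj u v → c u ≠ c v
  have hinj : IsProper fun v => Fintype.equivFin V v := fun u v huv h =>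
    huv.ne ((Fintype.equivFin V).injective (Fin.ext h))
  obtain ⟨c, hc, hmin⟩ := exists_minimalFor_of_wellFoundedLT IsProper (fun c => ∑ v, c v) ⟨_, hinj⟩
  refine ⟨c, hc, fun v j hj => ?_⟩
  by_contra! hfree
  let c' := Function.update c v j
  have hc'v : c' v = j := Function.update_self v j c
  have hc'x : ∀ x ≠ v, c' x = c x := fun x hx => Function.update_of_ne hx j c
  have hc' : IsProper c' := by
    intro x y hxy
    by_cases hx : x = v <;> by_cases hy : y = v
    · exact (hxy.ne (hx.trans hy.symm)).elim
    · subst hx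
      rw [hc'v, hc'x y hy]
      exact (hfree y hxy).symm
    · subst hy
      rw [hc'v, hc'x x hx]
      exact hfree x hxy.symm
    · rw [hc'x x hx, hc'x y hy]
      exact hc x y hxy
  have hlt : ∑ x, c' x < ∑ x, c x := by
    refine Finset.sum_lt_sum (fun x _ => ?_) ⟨v, Finset.mem_univ v, hc'v ▸ hj⟩
    by_cases hx : x = v
    · exact hx ▸ hc'v ▸ hj.le
    · exact (hc'x x hx).le
  exact hlt.not_ge (hmin hc' hlt.le)

theorem cliqueNum_le_grundyNumber [Finite V] : G.cliqueNum ≤ grundyNumber G := by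
  cases nonempty_fintype V
  obtain ⟨c, hprop, hc⟩ := exists_proper_hasSmallerColorNeighbors (G := G)
  obtain ⟨m, c', hc', hval⟩ := hc.exists_isPseudoGrundyColoring
  have hprop' : IsProperColoring G c' := fun u v huv h =>
    hprop u v huv (by rw [← hval, ← hval, h])
  obtain ⟨t, ht⟩ := G.exists_isNClique_cliqueNum
  have hinj : Set.InjOn c' t := fun x hx y hy hxy => by
    by_contra hne
    exact hprop' x y (ht.isClique hx hy hne) hxy
  calc G.cliqueNum = t.card := ht.card_eq.symm
    _ ≤ (Finset.univ : Finset (Fin m)).card :=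
      Finset.card_le_card_of_injOn c' (fun _ _ => Finset.mem_coe.mpr (Finset.mem_univ _)) hinj
    _ = m := by simp
    _ ≤ grundyNumber G := le_csSup bddAbove_grundy ⟨c', hprop', hc'⟩

theorem cliqueNum_le_pseudoGrundyNumber [Finite V] : G.cliqueNum ≤ pseudoGrundyNumber G :=
  cliqueNum_le_grundyNumber.trans grundyNumber_le_pseudoGrundyNumber

/-- `G` has no induced `P₄` or `C₄`: every path `a - b - c - d` has a chord `ac` or `bd`. -/
def IsTriviallyPerfect (G : SimpleGraph V) : Prop :=
  ∀ ⦃a b c d : V⦄, G.Adj a b → G.Adj b c → G.Adj c d → a ≠ c → b ≠ d → G.Adj a c ∨ G.Adj b d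

theorem IsTriviallyPerfect.induce (hG : IsTriviallyPerfect G) (s : Set V) :
    IsTriviallyPerfect (G.induce s) :=
  fun _ _ _ _ hab hbc hcd hac hbd =>
    hG hab hbc hcd (fun h => hac (Subtype.ext h)) (fun h => hbd (Subtype.ext h))

theorem IsTriviallyPerfect.closedNeighborSet_subset_or (hG : IsTriviallyPerfect G) {x y : V}
    (hxy : G.Adj x y) :
    G.closedNeighborSet x ⊆ G.closedNeighborSet y ∨
      G.closedNeighborSet y ⊆ G.closedNeighborSet x := by
  by_contra! h
  obtain ⟨⟨a, hax, hay⟩, ⟨b, hby, hbx⟩⟩ := And.imp Set.not_subset.mp Set.not_subset.mp h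
  simp only [mem_closedNeighborSet, not_or] at hax hay hby hbx
  have hxa : G.Adj x a := hax.resolve_left fun h => hay.2 (h ▸ hxy.symm)
  have hyb : G.Adj y b := hby.resolve_left fun h => hbx.2 (h ▸ hxy)
  rcases hG hxa.symm hxy hyb hay.1 (Ne.symm hbx.1) with h | h
  · exact hay.2 h.symm
  · exact hbx.2 h

theorem IsTriviallyPerfect.closedNeighborSet_subset_of_ncard_le [Finite V]
    (hG : IsTriviallyPerfect G) {B : Set V} (hB : (G.induce B).Preconnected) {r : V} (hr : r ∈ B)
    (hmax : ∀ x ∈ B, (G.closedNeighborSet x).ncard ≤ (G.closedNeighborSet r).ncard) {x : V}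
    (hx : x ∈ B) : G.closedNeighborSet x ⊆ G.closedNeighborSet r := by
  suffices ∀ y : B, Relation.ReflTransGen (G.induce B).Adj ⟨r, hr⟩ y →
      G.closedNeighborSet y ⊆ G.closedNeighborSet r from
    this ⟨x, hx⟩ ((reachable_iff_reflTransGen _ _).mp (hB _ _))
  intro y hy
  induction hy with
  | refl => exact subset_rfl
  | @tail y z _ hyz ih =>
    rcases ih (Or.inr hyz) with hzr | hrz
    · exact hzr ▸ subset_rfl
    · exact (hG.closedNeighborSet_subset_or hrz).elim
        (fun h => (Set.eq_of_subset_of_ncard_le h (hmax z z.2)).ge) id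

theorem IsTriviallyPerfect.hadwigerNumber_le_cliqueNum [Finite V] (hG : IsTriviallyPerfect G) :
    hadwigerNumber G ≤ G.cliqueNum := by
  refine csSup_le' ?_
  rintro k ⟨B, hconn, hdisj, hedge⟩
  choose r hrB hrmax using fun i => Set.exists_max_image (B i)
    (fun x => (G.closedNeighborSet x).ncard) (Set.toFinite _)
    (Set.nonempty_coe_sort.mp (hconn i).nonempty)
  have hdom : ∀ i, ∀ x ∈ B i, G.closedNeighborSet x ⊆ G.closedNeighborSet (r i) := fun i _ =>
    hG.closedNeighborSet_subset_of_ncard_le (hconn i).preconnected (hrB i) (hrmax i)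
  have hne : ∀ i j, i ≠ j → ∀ x ∈ B i, ∀ y ∈ B j, x ≠ y := fun i j hij x hx y hy hxy =>
    Set.disjoint_left.mp (hdisj i j hij) hx (hxy ▸ hy)
  have hadj : ∀ i j, i ≠ j → G.Adj (r i) (r j) := by
    intro i j hij
    obtain ⟨x, hx, y, hy, hxy⟩ := hedge i j hij
    have hry : G.Adj (r i) y :=
      (hdom i x hx (Or.inr hxy)).resolve_left (hne j i hij.symm y hy (r i) (hrB i))
    have hri : r i ∈ G.closedNeighborSet (r j) := hdom j y hy (Or.inr hry.symm)
    exact (hri.resolve_left (hne i j hij _ (hrB i) _ (hrB j))).symm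
  have hinj : Function.Injective r := fun i j h => by
    by_contra hij
    exact (hadj i j hij).ne h
  calc k = (Set.range r).ncard := by simp [Set.ncard_range_of_injective hinj]
    _ ≤ G.cliqueNum := IsClique.ncard_le_cliqueNum <| by
      rintro _ ⟨i, rfl⟩ _ ⟨j, rfl⟩ hij
      exact hadj i j fun h => hij (h ▸ rfl)

theorem IsTriviallyPerfect.exists_isClique_Iic_subset_image [Finite V] {α : Type*} [LinearOrder α]
    (hG : IsTriviallyPerfect G) {c : V → α} (hc : HasSmallerColorNeighbors G c) (v : V) :
    ∃ K ⊆ G.closedNeighborSet v, G.IsClique K ∧ Set.Iic (c v) ⊆ c '' K := by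
  induction hn : (G.closedNeighborSet v).ncard using Nat.strong_induction_on generalizing v with
  | _ n ih =>
  set N := G.closedNeighborSet v
  set A := {w ∈ N | N ⊆ G.closedNeighborSet w}
  have hvA : v ∈ A := ⟨Or.inl rfl, subset_rfl⟩
  have hAadj : ∀ w ∈ A, ∀ x ∈ N, w ≠ x → G.Adj w x := fun w hw x hx hwx =>
    (hw.2 hx).resolve_left (Ne.symm hwx)
  have hclique : ∀ K ⊆ N, G.IsClique K → G.IsClique (K ∪ A) := by
    rintro K hKN hK x (hx | hx) y (hy | hy) hxy
    · exact hK hx hy hxy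
    · exact (hAadj y hy x (hKN hx) hxy.symm).symm
    · exact hAadj x hx y (hKN hy) hxy
    · exact hAadj x hx y hy.1 hxy
  by_cases hcov : ∀ j < c v, j ∈ c '' A
  · refine ⟨A, Set.sep_subset _ _, fun x hx y hy hxy => hAadj x hx y hy.1 hxy, ?_⟩
    intro j hj
    rcases (Set.mem_Iic.mp hj).lt_or_eq with h | h
    · exact hcov j h
    · exact ⟨v, hvA, h.symm⟩
  push Not at hcov
  obtain ⟨j, ⟨hjv, hjA⟩, hjmax⟩ := Set.exists_max_image {j | j < c v ∧ j ∉ c '' A} id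
    ((Set.toFinite N).image c |>.subset fun j hj => by
      obtain ⟨u, hvu, hu⟩ := hc v j hj.1
      exact ⟨u, Or.inr hvu, hu⟩) hcov
  obtain ⟨u, hvu, rfl⟩ := hc v j hjv
  have huN : G.closedNeighborSet u ⊂ N := by
    have hNu : ¬ N ⊆ G.closedNeighborSet u := fun h => hjA ⟨u, ⟨Or.inr hvu, h⟩, rfl⟩
    exact ((hG.closedNeighborSet_subset_or hvu).resolve_left hNu).ssubset_of_not_subset hNu
  obtain ⟨K, hKu, hK, hKc⟩ := ih _ (hn ▸ Set.ncard_lt_ncard huN) u rfl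
  have hKN := hKu.trans huN.subset
  refine ⟨K ∪ A, Set.union_subset hKN (Set.sep_subset _ _), hclique K hKN hK, fun i hi => ?_⟩
  by_cases hiA : i ∈ c '' A
  · exact Set.image_mono Set.subset_union_right hiA
  have hiv : i < c v := (Set.mem_Iic.mp hi).lt_of_ne fun h => hiA ⟨v, hvA, h.symm⟩
  exact Set.image_mono Set.subset_union_left (hKc (hjmax i ⟨hiv, hiA⟩))

theorem IsTriviallyPerfect.pseudoGrundyNumber_le_cliqueNum [Finite V]
    (hG : IsTriviallyPerfect G) : pseudoGrundyNumber G ≤ G.cliqueNum := by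
  refine csSup_le' ?_
  rintro (_ | k) ⟨c, hsurj, hc⟩
  · exact Nat.zero_le _
  obtain ⟨v, hv⟩ := hsurj (Fin.last k)
  obtain ⟨K, -, hK, hKc⟩ := hG.exists_isClique_Iic_subset_image hc v
  have himage : c '' K = Set.univ :=
    Set.eq_univ_of_univ_subset fun i _ => hKc (hv ▸ Fin.le_last i)
  calc k + 1 = (Set.univ : Set (Fin (k + 1))).ncard := by simp
    _ = (c '' K).ncard := by rw [himage]
    _ ≤ K.ncard := Set.ncard_image_le (Set.toFinite K)
    _ ≤ G.cliqueNum := hK.ncard_le_cliqueNum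

/-- `a - b - c - d` is a path of `H` without the chords `ac`, `bd`, through all vertices of `H`:
`H` is an induced `P₄`, or an induced `C₄` if `a` and `d` are adjacent. -/
structure IsP4OrC4 {W : Type*} (H : SimpleGraph W) (a b c d : W) : Prop where
  adj_ab : H.Adj a b
  adj_bc : H.Adj b c
  adj_cd : H.Adj c d
  not_adj_ac : ¬ H.Adj a c
  not_adj_bd : ¬ H.Adj b d
  ne_ac : a ≠ c
  ne_bd : b ≠ d
  eq_or : ∀ x, x = a ∨ x = b ∨ x = c ∨ x = d

theorem exists_isP4OrC4_of_not_isTriviallyPerfect (hG : ¬ IsTriviallyPerfect G) :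
    ∃ s : Set V, ∃ a b c d : s, IsP4OrC4 (G.induce s) a b c d := by
  simp only [IsTriviallyPerfect, not_forall, not_or] at hG
  obtain ⟨a, b, c, d, hab, hbc, hcd, hac, hbd, hnac, hnbd⟩ := hG
  refine ⟨{a, b, c, d}, ⟨a, by simp⟩, ⟨b, by simp⟩, ⟨c, by simp⟩, ⟨d, by simp⟩,
    ⟨hab, hbc, hcd, hnac, hnbd, fun h => hac (congrArg Subtype.val h),
      fun h => hbd (congrArg Subtype.val h), ?_⟩⟩
  rintro ⟨x, hx⟩
  simp only [Set.mem_insert_iff, Set.mem_singleton_iff] at hx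
  rcases hx with rfl | rfl | rfl | rfl <;> simp

namespace IsP4OrC4

variable {W : Type*} {H : SimpleGraph W} {a b c d : W}

theorem ne_ad (h : IsP4OrC4 H a b c d) : a ≠ d :=
  fun had => h.not_adj_ac (had ▸ h.adj_cd.symm)

theorem reverse (h : IsP4OrC4 H a b c d) : IsP4OrC4 H d c b a where
  adj_ab := h.adj_cd.symm
  adj_bc := h.adj_bc.symm
  adj_cd := h.adj_ab.symm
  not_adj_ac := fun hdb => h.not_adj_bd hdb.symm
  not_adj_bd := fun hca => h.not_adj_ac hca.symm
  ne_ac := h.ne_bd.symm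
  ne_bd := h.ne_ac.symm
  eq_or x := by rcases h.eq_or x with rfl | rfl | rfl | rfl <;> simp

theorem rotate (h : IsP4OrC4 H a b c d) (had : H.Adj a d) : IsP4OrC4 H b c d a where
  adj_ab := h.adj_bc
  adj_bc := h.adj_cd
  adj_cd := had.symm
  not_adj_ac := h.not_adj_bd
  not_adj_bd := fun hca => h.not_adj_ac hca.symm
  ne_ac := h.ne_bd
  ne_bd := h.ne_ac.symm
  eq_or x := by rcases h.eq_or x with rfl | rfl | rfl | rfl <;> simp

theorem eq_or_eq_of_adj_left (h : IsP4OrC4 H a b c d) {u : W} (hau : H.Adj a u) :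
    u = b ∨ u = d := by
  have := h.not_adj_ac
  rcases h.eq_or u with rfl | rfl | rfl | rfl <;> simp_all

theorem eq_or_eq_of_adj_second (h : IsP4OrC4 H a b c d) {u : W} (hbu : H.Adj b u) :
    u = a ∨ u = c := by
  have := h.not_adj_bd
  rcases h.eq_or u with rfl | rfl | rfl | rfl <;> simp_all

theorem notMem_of_preconnected (h : IsP4OrC4 H a b c d) (had : ¬ H.Adj a d) {S : Set W}
    (hS : (H.induce S).Preconnected) (ha : a ∈ S) (hb : b ∉ S) : d ∉ S := by
  intro hd
  obtain ⟨p⟩ := hS ⟨a, ha⟩ ⟨d, hd⟩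
  have hnil : ¬ p.Nil := Walk.not_nil_of_ne fun e => h.ne_ad (congrArg Subtype.val e)
  rcases h.eq_or_eq_of_adj_left (p.adj_snd hnil) with hsnd | hsnd
  · exact hb (hsnd ▸ p.snd.2)
  · exact had (hsnd ▸ p.adj_snd hnil)

theorem cliqueNum_le_two [Finite W] (h : IsP4OrC4 H a b c d) : H.cliqueNum ≤ 2 := by
  classical
  obtain ⟨t, ht⟩ := H.exists_isNClique_cliqueNum
  -- a clique meets each of the non-edges `{a, c}` (the neighbors of `b`) and `{b, d}` at most once
  have hinj : Set.InjOn (fun x => decide (H.Adj x b)) t := by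
    intro x hx y hy hxy
    by_contra hne
    have hadj := ht.isClique hx hy hne
    have := h.adj_ab; have := h.adj_bc; have := h.not_adj_ac; have := h.not_adj_bd
    rcases h.eq_or x with rfl | rfl | rfl | rfl <;> rcases h.eq_or y with rfl | rfl | rfl | rfl <;>
      simp_all [adj_comm]
  rw [← ht.card_eq]
  simpa using
    Finset.card_le_card_of_injOn _ (fun _ _ => Finset.mem_coe.mpr (Finset.mem_univ _)) hinj

theorem exists_pseudoGrundyColoring (h : IsP4OrC4 H a b c d) :
    ∃ col : W → Fin 3, IsPseudoGrundyColoring H col ∧ (¬ H.Adj a d → IsProperColoring H col) := by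
  classical
  let col : W → Fin 3 := fun x => if x = b then 2 else if x = c then 1 else 0
  have ha : col a = 0 := by simp [col, h.adj_ab.ne, h.ne_ac]
  have hb : col b = 2 := by simp [col]
  have hc : col c = 1 := by simp [col, h.adj_bc.ne.symm]
  have hd : col d = 0 := by simp [col, h.ne_bd.symm, h.adj_cd.ne.symm]
  refine ⟨col, ⟨fun i => ?_, fun v j hj => ?_⟩, fun had x y hxy => ?_⟩
  · fin_cases i
    exacts [⟨a, ha⟩, ⟨c, hc⟩, ⟨b, hb⟩]
  · rcases h.eq_or v with rfl | rfl | rfl | rfl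
    · simp [ha] at hj
    · rw [hb] at hj
      fin_cases j
      exacts [⟨_, h.adj_ab.symm, ha⟩, ⟨_, h.adj_bc, hc⟩, absurd hj (lt_irrefl _)]
    · rw [hc] at hj
      fin_cases j
      exacts [⟨_, h.adj_cd, hd⟩, absurd hj (lt_irrefl _), absurd hj (by decide)]
    · simp [hd] at hj
  · have := h.not_adj_ac; have := h.not_adj_bd
    rcases h.eq_or x with rfl | rfl | rfl | rfl <;> rcases h.eq_or y with rfl | rfl | rfl | rfl <;>
      simp_all [adj_comm]

theorem three_le_pseudoGrundyNumber [Finite W] (h : IsP4OrC4 H a b c d) :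
    3 ≤ pseudoGrundyNumber H :=
  have ⟨col, hcol, _⟩ := h.exists_pseudoGrundyColoring
  le_csSup bddAbove_pseudoGrundy ⟨col, hcol⟩

theorem three_le_grundyNumber [Finite W] (h : IsP4OrC4 H a b c d) (had : ¬ H.Adj a d) :
    3 ≤ grundyNumber H :=
  have ⟨col, hcol, hprop⟩ := h.exists_pseudoGrundyColoring
  le_csSup bddAbove_grundy ⟨col, hprop had, hcol⟩

theorem val_color_left_ne_two (h : IsP4OrC4 H a b c d) {k : ℕ} {col : W → Fin k}
    (hprop : IsProperColoring H col) (hcol : HasSmallerColorNeighbors H col) :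
    (col a : ℕ) ≠ 2 := by
  intro ha
  have hnbr_bd : ∀ u, u = b ∨ u = d → ∀ w, H.Adj u w → w = a ∨ w = c := by
    rintro u (rfl | rfl) w huw
    exacts [h.eq_or_eq_of_adj_second huw, (h.reverse.eq_or_eq_of_adj_left huw).symm]
  have hadj_c : ∀ u, u = b ∨ u = d → H.Adj c u := by
    rintro u (rfl | rfl)
    exacts [h.adj_bc.symm, h.adj_cd]
  have hk : 2 < k := ha ▸ (col a).2
  obtain ⟨u₀, hau₀, hu₀⟩ := hcol a ⟨0, by omega⟩ (by simp [Fin.lt_def, ha])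
  obtain ⟨u₁, hau₁, hu₁⟩ := hcol a ⟨1, by omega⟩ (by simp [Fin.lt_def, ha])
  -- `u₁` needs a neighbor of color `0`; it can only be `c`, which clashes with `u₀`
  obtain ⟨w, hu₁w, hw⟩ := hcol u₁ ⟨0, by omega⟩ (by simp [Fin.lt_def, hu₁])
  have hwc : w = c := (hnbr_bd u₁ (h.eq_or_eq_of_adj_left hau₁) w hu₁w).resolve_left fun hwa => by
    simp [hwa, Fin.ext_iff, ha] at hw
  exact hprop c u₀ (hadj_c u₀ (h.eq_or_eq_of_adj_left hau₀)) (hwc ▸ hw.trans hu₀.symm)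

theorem grundyNumber_le_two (h : IsP4OrC4 H a b c d) (had : H.Adj a d) :
    grundyNumber H ≤ 2 := by
  refine csSup_le' ?_
  rintro k ⟨col, hprop, hsurj, hcol⟩
  by_contra! hk
  obtain ⟨x, hx⟩ := hsurj ⟨2, hk⟩
  have h₁ := h.rotate had
  have h₂ := h₁.rotate h.adj_ab.symm
  obtain ⟨p, q, r, hx'⟩ : ∃ p q r, IsP4OrC4 H x p q r := by
    rcases h.eq_or x with rfl | rfl | rfl | rfl
    exacts [⟨_, _, _, h⟩, ⟨_, _, _, h₁⟩, ⟨_, _, _, h₂⟩, ⟨_, _, _, h₂.rotate h.adj_bc.symm⟩]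
  exact hx'.val_color_left_ne_two hprop hcol (congrArg Fin.val hx)

theorem three_le_hadwigerNumber [Finite W] (h : IsP4OrC4 H a b c d) (had : H.Adj a d) :
    3 ≤ hadwigerNumber H := by
  refine le_csSup bddAbove_hasCompleteMinor ⟨![{a, b}, {c}, {d}], fun i => ?_, fun i j hij => ?_,
    fun i j hij => ?_⟩
  · fin_cases i
    exacts [induce_pair_connected_of_adj h.adj_ab, (.of_subsingleton : (H.induce {c}).Connected),
      (.of_subsingleton : (H.induce {d}).Connected)]
  · fin_cases i <;> fin_cases j <;>
      simp_all [h.ne_ac.symm, h.adj_bc.ne.symm, h.ne_ad.symm, h.ne_bd.symm, h.adj_cd.ne,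
        h.adj_cd.ne.symm]
  · fin_cases i <;> fin_cases j <;>
      simp_all [h.adj_bc, h.adj_cd, h.adj_bc.symm, h.adj_cd.symm, had.symm]

theorem hadwigerNumber_le_two (h : IsP4OrC4 H a b c d) (had : ¬ H.Adj a d) :
    hadwigerNumber H ≤ 2 := by
  classical
  refine csSup_le' ?_
  rintro k ⟨B, hconn, hdisj, hedge⟩
  by_contra! hk
  have hsame : ∀ {i j x}, x ∈ B i → x ∈ B j → i = j := fun hi hj => by
    by_contra hij
    exact Set.disjoint_left.mp (hdisj _ _ hij) hi hj
  have hmeet : ∀ r, b ∈ B r ∨ c ∈ B r := by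
    intro r
    by_contra! hr
    have hexit : ∀ i ≠ r, (a ∈ B r ∧ b ∈ B i) ∨ (d ∈ B r ∧ c ∈ B i) := by
      intro i hir
      obtain ⟨u, hu, v, hv, huv⟩ := hedge r i (Ne.symm hir)
      rcases h.eq_or u with rfl | rfl | rfl | rfl
      · exact .inl ⟨hu, (h.eq_or_eq_of_adj_left huv).resolve_right
          (fun e => had (e ▸ huv)) ▸ hv⟩
      · exact absurd hu hr.1
      · exact absurd hu hr.2
      · refine .inr ⟨hu, (h.reverse.eq_or_eq_of_adj_left huv).resolve_right
          (fun e => had (e ▸ huv).symm) ▸ hv⟩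
    have had' : ¬ (a ∈ B r ∧ d ∈ B r) := fun ⟨ha, hd⟩ =>
      h.notMem_of_preconnected had (hconn r).preconnected ha hr.1 hd
    obtain ⟨i, hi, j, hj, hij⟩ := (Finset.one_lt_card (s := Finset.univ.erase r)).mp (by
      rw [Finset.card_erase_of_mem (Finset.mem_univ r), Finset.card_univ, Fintype.card_fin]
      omega)
    rw [Finset.mem_erase] at hi hj
    rcases hexit i hi.1 with ⟨ha, hbi⟩ | ⟨hd, hci⟩ <;>
      rcases hexit j hj.1 with ⟨ha', hbj⟩ | ⟨hd', hcj⟩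
    · exact hij (hsame hbi hbj)
    · exact had' ⟨ha, hd'⟩
    · exact had' ⟨ha', hd⟩
    · exact hij (hsame hci hcj)
  have hinj : Function.Injective fun i => decide (b ∈ B i) := by
    intro i j hij
    by_cases hbi : b ∈ B i
    · exact hsame hbi (by simpa [hbi] using hij.symm)
    · exact hsame ((hmeet i).resolve_left hbi)
        ((hmeet j).resolve_left (by simpa [hbi] using hij.symm))
  have := Fintype.card_le_of_injective _ hinj
  simp only [Fintype.card_fin, Fintype.card_bool] at this
  omega

theorem cliqueNum_ne_pseudoGrundyNumber [Finite W] (h : IsP4OrC4 H a b c d) :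
    H.cliqueNum ≠ pseudoGrundyNumber H := by
  have := h.cliqueNum_le_two
  have := h.three_le_pseudoGrundyNumber
  omega

theorem grundyNumber_ne_hadwigerNumber [Finite W] (h : IsP4OrC4 H a b c d) :
    grundyNumber H ≠ hadwigerNumber H := by
  by_cases had : H.Adj a d
  · have := h.grundyNumber_le_two had
    have := h.three_le_hadwigerNumber had
    omega
  · have := h.three_le_grundyNumber had
    have := h.hadwigerNumber_le_two had
    omega

end IsP4OrC4

theorem isTriviallyPerfect_iff_forall_cliqueNum_eq_pseudoGrundyNumber [Finite V] :
    IsTriviallyPerfect G ↔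
      ∀ s : Set V, (G.induce s).cliqueNum = pseudoGrundyNumber (G.induce s) := by
  refine ⟨fun hG s => le_antisymm cliqueNum_le_pseudoGrundyNumber
    (hG.induce s).pseudoGrundyNumber_le_cliqueNum, fun h => ?_⟩
  by_contra hG
  obtain ⟨s, a, b, c, d, hs⟩ := exists_isP4OrC4_of_not_isTriviallyPerfect hG
  exact hs.cliqueNum_ne_pseudoGrundyNumber (h s)

theorem isTriviallyPerfect_iff_forall_grundyNumber_eq_hadwigerNumber [Finite V] :
    IsTriviallyPerfect G ↔
      ∀ s : Set V, grundyNumber (G.induce s) = hadwigerNumber (G.induce s) := by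
  refine ⟨fun hG s => ?_, fun h => ?_⟩
  · have hs := hG.induce s
    exact le_antisymm
      (grundyNumber_le_pseudoGrundyNumber.trans <|
        hs.pseudoGrundyNumber_le_cliqueNum.trans cliqueNum_le_hadwigerNumber)
      (hs.hadwigerNumber_le_cliqueNum.trans cliqueNum_le_grundyNumber)
  · by_contra hG
    obtain ⟨s, a, b, c, d, hs⟩ := exists_isP4OrC4_of_not_isTriviallyPerfect hG
    exact hs.grundyNumber_ne_hadwigerNumber (h s)

end

/-- `G` is Γh-perfect iff `G` is ωγ-perfect. -/
theorem grundy_hadwiger_perfect_iff_omega_pseudoGrundy_perfect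
    {V : Type*} [Fintype V] (G : SimpleGraph V) :
    (∀ s : Set V, grundyNumber (G.induce s) = hadwigerNumber (G.induce s)) ↔
      (∀ s : Set V, (G.induce s).cliqueNum = pseudoGrundyNumber (G.induce s)) :=
  isTriviallyPerfect_iff_forall_grundyNumber_eq_hadwigerNumber.symm.trans
    isTriviallyPerfect_iff_forall_cliqueNum_eq_pseudoGrundyNumber
end
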